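/- Let Ĝ = (V, ŵ) be a weighted graph with total edge weight Ŵ = Σ_e ŵ_e > 0, let Y be a real number with 0 ≤ Y ≤ Ŵ, and let Ḡ = (V, w̄) be the rescaled graph with w̄ = ((Ŵ + Y)/Ŵ) · ŵ. Then for all disjoint subsets S, T ⊆ V: Cut_△^{(Ĝ)}(S,T) ≤ Cut_△^{(Ḡ)}(S,T) ≤ Cut_△^{(Ĝ)}(S,T) + 7 · Y · ℓ₃(Ḡ). -/

import Mathlib

/-!
Rescaling by `c = (Ŵ + Y) / Ŵ ∈ [1, 2]` multiplies every triangle weight by `c³`, so the cut grows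
by `(c³ - 1) · Cut ≤ 7 (c - 1) · Cut`, and `(c - 1) Ŵ = Y`. It remains to bound `Cut` by `Ŵ · ℓ₃`:
every triangle is an edge `{a, b}` plus a third vertex `s`, and the triangles through a fixed edge
weigh `w_ab · ∑ₛ w_as w_bs ≤ w_ab · ℓ₃` in total. Finally `ℓ₃` is monotone in the weights.
-/

open Finset

variable {V : Type*} [Fintype V] [DecidableEq V]

/-- The weight of a 3-element vertex subset: the product of its edge weights. -/
noncomputable def triWeight (w : Sym2 V → ℝ) (t : Finset V) : ℝ :=
  ∏ e ∈ t.sym2.filter fun e => ¬ e.IsDiag, w e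

/-- Triangle-motif size of the cut `(S, T)`. -/
noncomputable def cutTri (w : Sym2 V → ℝ) (S T : Finset V) : ℝ :=
  ∑ t ∈ (Finset.univ.powersetCard 3).filter
      (fun t => (t ∩ S).Nonempty ∧ (t ∩ T).Nonempty),
    triWeight w t

/-- Total edge weight. -/
noncomputable def totalWeight (w : Sym2 V → ℝ) : ℝ :=
  ∑ e ∈ Finset.univ.filter fun e : Sym2 V => ¬ e.IsDiag, w e

/-- Local sensitivity of triangle-motif cuts. -/
noncomputable def ell3 (w : Sym2 V → ℝ) : ℝ :=
  ⨆ p : V × V,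
    if p.1 ≠ p.2 then ∑ s ∈ ({p.1, p.2} : Finset V)ᶜ, w s(p.1, s) * w s(p.2, s) else 0

set_option linter.unusedSectionVars false

lemma triWeight_triple (w : Sym2 V → ℝ) {a b c : V} (hab : a ≠ b) (hac : a ≠ c) (hbc : b ≠ c) :
    triWeight w {a, b, c} = w s(a, b) * w s(a, c) * w s(b, c) := by
  have hedges : ({a, b, c} : Finset V).sym2.filter (fun e => ¬ e.IsDiag)
      = {s(a, b), s(a, c), s(b, c)} := by
    ext e
    induction e with
    | _ x y =>
      simp only [mem_filter, mk_mem_sym2_iff, mem_insert, mem_singleton,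
        Sym2.mk_isDiag_iff, Sym2.eq_iff]
      grind
  rw [triWeight, hedges, prod_insert (by simp; tauto),
    prod_insert (by simp; tauto), prod_singleton, mul_assoc]

lemma triWeight_nonneg {w : Sym2 V → ℝ} (hw : ∀ e, 0 ≤ w e) (t : Finset V) :
    0 ≤ triWeight w t :=
  prod_nonneg fun e _ => hw e

lemma cutTri_nonneg {w : Sym2 V → ℝ} (hw : ∀ e, 0 ≤ w e) (S T : Finset V) :
    0 ≤ cutTri w S T :=
  sum_nonneg fun t _ => triWeight_nonneg hw t

lemma cutTri_const_mul (w : Sym2 V → ℝ) (c : ℝ) (S T : Finset V) :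
    cutTri (fun e => c * w e) S T = c ^ 3 * cutTri w S T := by
  rw [cutTri, cutTri, mul_sum]
  refine sum_congr rfl fun t ht => ?_
  obtain ⟨a, b, d, hab, had, hbd, rfl⟩ :=
    card_eq_three.mp (mem_powersetCard_univ.mp (mem_filter.mp ht).1)
  rw [triWeight_triple _ hab had hbd, triWeight_triple _ hab had hbd]
  ring

lemma le_ell3 (w : Sym2 V → ℝ) {a b : V} (hab : a ≠ b) :
    ∑ s ∈ ({a, b} : Finset V)ᶜ, w s(a, s) * w s(b, s) ≤ ell3 w :=
  le_ciSup_of_le (Set.finite_range _).bddAbove (a, b) (by simp [hab])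

lemma ell3_mono {w w' : Sym2 V → ℝ} (hw : ∀ e, 0 ≤ w e) (hww' : ∀ e, w e ≤ w' e) :
    ell3 w ≤ ell3 w' := by
  refine ciSup_mono (Set.finite_range _).bddAbove fun p => ?_
  split_ifs
  · exact sum_le_sum fun s _ =>
      mul_le_mul (hww' _) (hww' _) (hw _) ((hw _).trans (hww' _))
  · rfl

lemma sum_triWeight_le_totalWeight_mul_ell3 {w : Sym2 V → ℝ} (hw : ∀ e, 0 ≤ w e) :
    ∑ t ∈ univ.powersetCard 3, triWeight w t ≤ totalWeight w * ell3 w := by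
  -- an arbitrary order, used only to orient each edge once
  let : LinearOrder V := LinearOrder.lift' (Fintype.equivFin V) (Fintype.equivFin V).injective
  set edges := univ.offDiag.filter fun p : V × V => p.1 < p.2
  set wedges := edges.sigma fun p => ({p.1, p.2} : Finset V)ᶜ
  have hcover : univ.powersetCard 3 ⊆ wedges.image fun q => {q.1.1, q.1.2, q.2} := by
    intro t ht
    obtain ⟨a, b, c, hab, hac, hbc, rfl⟩ := card_eq_three.mp (mem_powersetCard_univ.mp ht)
    rcases hab.lt_or_gt with hlt | hlt
    · exact mem_image.mpr ⟨⟨(a, b), c⟩,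
        by simp [wedges, edges, hlt, hab, hac.symm, hbc.symm], rfl⟩
    · exact mem_image.mpr ⟨⟨(b, a), c⟩,
        by simp [wedges, edges, hlt, hab.symm, hac.symm, hbc.symm], insert_comm _ _ _⟩
  calc ∑ t ∈ univ.powersetCard 3, triWeight w t
      ≤ ∑ t ∈ wedges.image fun q => {q.1.1, q.1.2, q.2}, triWeight w t :=
        sum_le_sum_of_subset_of_nonneg hcover fun t _ _ => triWeight_nonneg hw t
    _ ≤ ∑ q ∈ wedges, triWeight w {q.1.1, q.1.2, q.2} :=
        sum_image_le_of_nonneg fun _ _ => triWeight_nonneg hw _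
    _ = ∑ p ∈ edges,
          w s(p.1, p.2) * ∑ s ∈ ({p.1, p.2} : Finset V)ᶜ, w s(p.1, s) * w s(p.2, s) := by
        rw [sum_sigma]
        refine sum_congr rfl fun p hp => ?_
        rw [mul_sum]
        refine sum_congr rfl fun s hs => ?_
        simp only [edges, mem_filter, mem_offDiag] at hp
        simp only [mem_compl, mem_insert, mem_singleton, not_or] at hs
        rw [triWeight_triple w hp.1.2.2 (Ne.symm hs.1) (Ne.symm hs.2), mul_assoc]
    _ ≤ ∑ p ∈ edges, w s(p.1, p.2) * ell3 w :=
        sum_le_sum fun p hp => mul_le_mul_of_nonneg_left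
          (le_ell3 w (mem_offDiag.mp (mem_filter.mp hp).1).2.2) (hw _)
    _ = totalWeight w * ell3 w := by
        rw [← sum_mul, totalWeight, ← sym2_univ]
        congr 1
        convert (sum_sym2_filter_not_isDiag univ w).symm

lemma cutTri_le_totalWeight_mul_ell3 {w : Sym2 V → ℝ} (hw : ∀ e, 0 ≤ w e) (S T : Finset V) :
    cutTri w S T ≤ totalWeight w * ell3 w :=
  (sum_le_sum_of_subset_of_nonneg (filter_subset _ _) fun t _ _ => triWeight_nonneg hw t).trans
    (sum_triWeight_le_totalWeight_mul_ell3 hw)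

lemma cube_mul_le_add_seven_mul {c x y : ℝ} (hc1 : 1 ≤ c) (hc2 : c ≤ 2) (hx : 0 ≤ x)
    (hxy : x ≤ y) : c ^ 3 * x ≤ x + 7 * (c - 1) * y := by
  nlinarith [mul_nonneg (mul_nonneg (sub_nonneg.mpr hc1) (sub_nonneg.mpr hc2))
      (mul_nonneg (by linarith : (0 : ℝ) ≤ c + 3) hx),
    mul_nonneg (sub_nonneg.mpr hc1) (sub_nonneg.mpr hxy)]

theorem cutTri_rescale_general (wHat : Sym2 V → ℝ) (hwHat : ∀ e, 0 ≤ wHat e)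
    (hW : 0 < totalWeight wHat) (Y : ℝ) (hY0 : 0 ≤ Y) (hY1 : Y ≤ totalWeight wHat)
    (wBar : Sym2 V → ℝ)
    (hwBar : wBar = fun e => ((totalWeight wHat + Y) / totalWeight wHat) * wHat e)
    (S T : Finset V) :
    cutTri wHat S T ≤ cutTri wBar S T ∧
      cutTri wBar S T ≤ cutTri wHat S T + 7 * Y * ell3 wBar := by
  set W := totalWeight wHat
  set c := (W + Y) / W
  have hc1 : 1 ≤ c := by rw [le_div_iff₀ hW]; linarith
  have hc2 : c ≤ 2 := by rw [div_le_iff₀ hW]; linarith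
  have hY : Y = (c - 1) * W := by simp only [c]; field_simp; ring
  have hwHat_le : ∀ e, wHat e ≤ wBar e := fun e => by
    rw [hwBar]; exact le_mul_of_one_le_left (hwHat e) hc1
  have hcut0 := cutTri_nonneg hwHat S T
  have hcut : cutTri wHat S T ≤ W * ell3 wBar :=
    (cutTri_le_totalWeight_mul_ell3 hwHat S T).trans
      (mul_le_mul_of_nonneg_left (ell3_mono hwHat hwHat_le) hW.le)
  rw [hwBar, cutTri_const_mul, ← hwBar, hY]
  constructor
  · exact le_mul_of_one_le_left hcut0 (one_le_pow₀ hc1)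
  · linarith [cube_mul_le_add_seven_mul hc1 hc2 hcut0 hcut]

theorem cutTri_rescale (wHat : Sym2 V → ℝ) (hwHat : ∀ e, 0 ≤ wHat e)
    (hW : 0 < totalWeight wHat) (Y : ℝ) (hY0 : 0 ≤ Y) (hY1 : Y ≤ totalWeight wHat)
    (wBar : Sym2 V → ℝ)
    (hwBar : wBar = fun e => ((totalWeight wHat + Y) / totalWeight wHat) * wHat e)
    (S T : Finset V) (hST : Disjoint S T) :
    cutTri wHat S T ≤ cutTri wBar S T ∧
      cutTri wBar S T ≤ cutTri wHat S T + 7 * Y * ell3 wBar :=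
  cutTri_rescale_general wHat hwHat hW Y hY0 hY1 wBar hwBar S T
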